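/- arXiv:2507.16730 — 4 statements merged into one kernel-verified Lean document; each statement's English description precedes it below -/
import Mathlib

section
/- (Johnson–Newman) Let G and H be two finite simple graphs on the same vertex set of size n, with adjacency matrices A(G) and A(H). Then G and H are generalized cospectral if and only if there exists a regular orthogonal n×n real matrix Q such that Qᵀ A(G) Q = A(H). -/
open SimpleGraph Matrix

/-- The characteristic polynomial (over `ℝ`) of the adjacency matrix of a finite graph. -/
noncomputable def adjCharPoly {V : Type} [Fintype V] [DecidableEq V] (G : SimpleGraph V) :
    Polynomial ℝ :=
  letI := Classical.decRel G.Adj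
  Matrix.charpoly (G.adjMatrix ℝ)

/-- Two finite graphs are cospectral if their adjacency matrices have the same
characteristic polynomial. -/
def Cospectral {V W : Type} [Fintype V] [DecidableEq V] [Fintype W] [DecidableEq W]
    (G : SimpleGraph V) (H : SimpleGraph W) : Prop :=
  adjCharPoly G = adjCharPoly H

/-- Generalized cospectrality: the graphs are cospectral and so are their complements. -/
def GenCospectral {V W : Type} [Fintype V] [DecidableEq V] [Fintype W] [DecidableEq W]
    (G : SimpleGraph V) (H : SimpleGraph W) : Prop :=
  Cospectral G H ∧ Cospectral Gᶜ Hᶜ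

/-- A cograph is a graph with no induced path `P₄` (on 4 vertices). -/
def IsCograph {V : Type} (G : SimpleGraph V) : Prop :=
  ¬ ∃ f : Fin 4 ↪ V, ∀ i j, G.Adj (f i) (f j) ↔ (SimpleGraph.pathGraph 4).Adj i j

/-- The number of isomorphism classes of graphs on `n` vertices satisfying an
isomorphism-invariant property `P`. -/
noncomputable def classCount (n : ℕ) (P : SimpleGraph (Fin n) → Prop) : ℕ :=
  Nat.card (Quot fun G H : {G : SimpleGraph (Fin n) // P G} => Nonempty (G.1 ≃g H.1))

/-- The adjacency matrix of a graph, over `ℝ`. -/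
noncomputable def adjMat {V : Type} [Fintype V] [DecidableEq V] (G : SimpleGraph V) :
    Matrix V V ℝ :=
  letI := Classical.decRel G.Adj
  G.adjMatrix ℝ

/-!
Diagonalise `A(G) = U D Uᵀ` and `A(H) = W D Wᵀ` orthogonally; cospectrality lets both use the
same sorted eigenvalue vector `d`. Since `A(Gᶜ) = J - I - A(G)` with `J = 𝟙𝟙ᵀ`, conjugating by `U`
turns it into `u uᵀ - diag (1 + d)` with `u = Uᵀ 𝟙`, whose characteristic polynomial is, by the
matrix determinant lemma, `∏ (X + 1 + dᵢ) · (1 - ∑ uᵢ² / (X + 1 + dᵢ))`. Uniqueness of partial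
fractions shows that cospectrality of the complements says exactly that `u` and `w = Wᵀ 𝟙` have
the same squared length on every eigenspace of `D` (the main angles agree). A Householder
reflection inside each eigenspace then gives an orthogonal `R` commuting with `D` with `R w = u`,
and `Q = U R Wᵀ` is the required regular orthogonal matrix. Conversely such a `Q` fixes `𝟙`, hence
`J`, and conjugation by it preserves characteristic polynomials.
-/

open Polynomial Finset

namespace Matrix

variable {n : Type*} [Fintype n]

theorem charpoly_one_add_eq_iff [DecidableEq n] {R : Type*} [CommRing R] {A B : Matrix n n R} :
    (1 + A).charpoly = (1 + B).charpoly ↔ A.charpoly = B.charpoly := by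
  have hshift (M : Matrix n n R) : (1 + M).charpoly = M.charpoly.comp (X + C (-1)) := by
    rw [← charpoly_sub_scalar, map_neg, map_one, sub_neg_eq_add, add_comm]
  have hunshift (M : Matrix n n R) : M.charpoly = (1 + M).charpoly.comp (X + C 1) := by
    rw [← charpoly_sub_scalar, map_one, add_sub_cancel_left]
  exact ⟨fun h => by rw [hunshift A, hunshift B, h], fun h => by rw [hshift A, hshift B, h]⟩

section PartialFractions

variable {K : Type*} [Field K]

theorem sum_filter_eq_zero_of_sum_div_X_sub_C_eq_zero [DecidableEq K] {c e : n → K}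
    (h : ∑ i, RatFunc.C (c i) / (RatFunc.X - RatFunc.C (e i)) = 0) (μ : K) :
    ∑ i with e i = μ, c i = 0 := by
  set s := univ.image e
  by_cases hμ : μ ∈ s
  swap
  · refine sum_eq_zero fun i hi => absurd ?_ hμ
    exact mem_image.mpr ⟨i, mem_univ i, (mem_filter.mp hi).2⟩
  have hgrouped :
      ∑ ν ∈ s, RatFunc.C (∑ i with e i = ν, c i) / (RatFunc.X - RatFunc.C ν) = 0 := by
    rw [← h, ← sum_fiberwise_of_maps_to (g := e) fun i _ => mem_image_of_mem e (mem_univ i)]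
    refine sum_congr rfl fun ν _ => ?_
    rw [map_sum, sum_div]
    exact sum_congr rfl fun i hi => by rw [(mem_filter.mp hi).2]
  -- clearing denominators by `∏ ν ∈ s, (X - ν)` leaves a sum whose value at `μ` sees one term
  have hpoly : ∑ ν ∈ s, C (∑ i with e i = ν, c i) * Lagrange.nodal (s.erase ν) id = 0 := by
    apply RatFunc.algebraMap_injective K
    rw [map_zero, ← mul_zero (algebraMap K[X] (RatFunc K) (Lagrange.nodal s id)), ← hgrouped,
      mul_sum, map_sum]
    refine sum_congr rfl fun ν hν => ?_
    have : (RatFunc.X - RatFunc.C ν : RatFunc K) ≠ 0 := by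
      simpa using RatFunc.algebraMap_ne_zero (X_sub_C_ne_zero ν)
    rw [Lagrange.nodal_eq_mul_nodal_erase hν]
    simp only [map_sum, map_mul, RatFunc.algebraMap_C, id_eq, map_sub, RatFunc.algebraMap_X]
    field_simp
  have hμ_term := congrArg (eval μ) hpoly
  rw [eval_finsetSum, sum_eq_single μ, eval_mul, eval_C, eval_zero] at hμ_term
  · exact (mul_eq_zero.mp hμ_term).resolve_right
      (Lagrange.eval_nodal_not_at_node fun ν hν => (ne_of_mem_erase hν).symm)
  · intro ν _ hne
    rw [eval_mul]
    exact mul_eq_zero_of_right _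
      (Lagrange.eval_nodal_at_node (v := id) (mem_erase.mpr ⟨Ne.symm hne, hμ⟩))
  · exact absurd hμ

variable [DecidableEq n]

theorem det_diagonal_sub_vecMulVec {f : n → K} (hf : ∀ i, f i ≠ 0) (x y : n → K) :
    (diagonal f - vecMulVec x y).det = (∏ i, f i) * (1 - ∑ i, x i * y i / f i) := by
  have hunit : IsUnit (diagonal f).det := by
    simpa [det_diagonal, isUnit_iff_ne_zero, prod_ne_zero_iff] using hf
  have hinv : (diagonal f)⁻¹ = diagonal fun i => (f i)⁻¹ :=
    inv_eq_left_inv (by simp [diagonal_mul_diagonal, hf])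
  rw [sub_eq_add_neg, ← neg_vecMulVec, vecMulVec_eq Unit,
    det_add_replicateCol_mul_replicateRow hunit, det_diagonal, det_unique, hinv]
  congr 1
  simp [mul_apply, replicateRow, replicateCol, diagonal_apply, sub_eq_add_neg, div_eq_mul_inv,
    mul_comm, mul_assoc]

theorem algebraMap_charpoly_vecMulVec_sub_diagonal (u d : n → K) :
    algebraMap K[X] (RatFunc K) (vecMulVec u u - diagonal d).charpoly =
      (∏ i, (RatFunc.X + RatFunc.C (d i))) *
        (1 - ∑ i, RatFunc.C (u i) ^ 2 / (RatFunc.X + RatFunc.C (d i))) := by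
  have hcharmatrix :
      (algebraMap K[X] (RatFunc K)).mapMatrix (vecMulVec u u - diagonal d).charmatrix =
        diagonal (fun i => RatFunc.X + RatFunc.C (d i)) -
          vecMulVec (fun i => RatFunc.C (u i)) (fun i => RatFunc.C (u i)) := by
    ext i j
    by_cases hij : i = j
    · subst hij
      simp only [RingHom.mapMatrix_apply, map_apply, charmatrix_apply_eq, sub_apply,
        vecMulVec_apply, diagonal_apply_eq, map_sub, map_mul, RatFunc.algebraMap_X,
        RatFunc.algebraMap_C]
      ring
    · simp [vecMulVec_apply, hij]
  have hne (i : n) : (RatFunc.X + RatFunc.C (d i) : RatFunc K) ≠ 0 := by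
    simpa using RatFunc.algebraMap_ne_zero (X_add_C_ne_zero (d i))
  rw [charpoly, RingHom.map_det, hcharmatrix, det_diagonal_sub_vecMulVec hne]
  simp_rw [sq]

theorem sum_filter_sq_eq_of_charpoly_vecMulVec_sub_diagonal_eq [DecidableEq K] {u w d : n → K}
    (h : (vecMulVec u u - diagonal d).charpoly = (vecMulVec w w - diagonal d).charpoly) (μ : K) :
    ∑ i with d i = μ, u i ^ 2 = ∑ i with d i = μ, w i ^ 2 := by
  have hne : (∏ i, (RatFunc.X + RatFunc.C (d i)) : RatFunc K) ≠ 0 := prod_ne_zero_iff.mpr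
    fun i _ => by simpa using RatFunc.algebraMap_ne_zero (X_add_C_ne_zero (d i))
  have hfractions := congrArg (algebraMap K[X] (RatFunc K)) h
  rw [algebraMap_charpoly_vecMulVec_sub_diagonal, algebraMap_charpoly_vecMulVec_sub_diagonal,
    mul_right_inj' hne, sub_right_inj, ← sub_eq_zero, ← sum_sub_distrib] at hfractions
  rw [← sub_eq_zero, ← sum_sub_distrib, ← neg_neg μ]
  convert sum_filter_eq_zero_of_sum_div_X_sub_C_eq_zero (e := -d)
    (c := fun i => u i ^ 2 - w i ^ 2) ?_ (-μ) using 2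
  · simp
  · rw [← hfractions]
    exact sum_congr rfl fun i _ => by simp [sub_div]

end PartialFractions

section FiberProj

/-- For each value `μ` of `d`, let `z_μ` be `z` restricted to the fibre `d⁻¹ μ`; this is
`∑ μ, z_μ z_μᵀ / ‖z_μ‖²`, the orthogonal projection onto the span of the `z_μ` (a fibre on which
`z` vanishes contributes `0 / 0 = 0`). -/
noncomputable def fiberProj {𝕜 : Type*} [Field 𝕜] [DecidableEq 𝕜] (d z : n → 𝕜) : Matrix n n 𝕜 :=
  of fun i j => if d j = d i then z i * z j / ∑ k with d k = d i, z k ^ 2 else 0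

section

variable {𝕜 : Type*} [Field 𝕜] [DecidableEq 𝕜] (d z : n → 𝕜)

theorem fiberProj_mulVec (x : n → 𝕜) :
    fiberProj d z *ᵥ x =
      fun i => z i * (∑ k with d k = d i, z k * x k) / ∑ k with d k = d i, z k ^ 2 := by
  ext i
  simp only [mulVec, dotProduct, fiberProj, of_apply, ite_mul, zero_mul, ← sum_filter]
  rw [mul_sum, sum_div]
  exact sum_congr rfl fun k _ => by ring

theorem fiberProj_transpose : (fiberProj d z)ᵀ = fiberProj d z := by
  ext i j
  simp only [transpose_apply, fiberProj, of_apply]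
  split_ifs with h h' h'
  · rw [h]; ring
  · exact absurd h.symm h'
  · exact absurd h'.symm h
  · rfl

theorem fiberProj_mul_self : fiberProj d z * fiberProj d z = fiberProj d z := by
  ext i j
  set S := ∑ k with d k = d i, z k ^ 2
  have hcol : ∑ k with d k = d i, z k * fiberProj d z k j =
      if d j = d i then z j * S / S else 0 := by
    split_ifs with hj
    · calc ∑ k with d k = d i, z k * fiberProj d z k j
          = ∑ k with d k = d i, z k ^ 2 * (z j / S) := sum_congr rfl fun k hk => by
            simp only [fiberProj, of_apply, (mem_filter.mp hk).2, hj, if_true, S]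
            ring
        _ = z j * S / S := by rw [← sum_mul]; ring
    · refine sum_eq_zero fun k hk => ?_
      simp [fiberProj, (mem_filter.mp hk).2, hj]
  change (fiberProj d z *ᵥ fun k => fiberProj d z k j) i = _
  rw [fiberProj_mulVec]
  dsimp only
  rw [hcol]
  simp only [fiberProj, of_apply]
  split_ifs
  · rcases eq_or_ne S 0 with hS | hS
    · simp [S, hS]
    · field_simp
  · simp

theorem commute_fiberProj_diagonal [DecidableEq n] : Commute (fiberProj d z) (diagonal d) := by
  ext i j
  simp only [mul_diagonal, diagonal_mul, fiberProj, of_apply]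
  split_ifs with h
  · rw [h, mul_comm]
  · simp

end

theorem exists_orthogonal_commute_diagonal_mulVec_eq {𝕜 : Type*} [Field 𝕜] [LinearOrder 𝕜]
    [IsStrictOrderedRing 𝕜] [DecidableEq n] {d u w : n → 𝕜}
    (h : ∀ μ, ∑ i with d i = μ, u i ^ 2 = ∑ i with d i = μ, w i ^ 2) :
    ∃ R : Matrix n n 𝕜, Rᵀ * R = 1 ∧ Commute R (diagonal d) ∧ R *ᵥ w = u := by
  set P := fiberProj d (w - u)
  refine ⟨1 - 2 • P, ?_, (Commute.one_left _).sub_left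
    ((commute_fiberProj_diagonal d _).smul_left 2), ?_⟩
  · rw [transpose_sub, transpose_one, transpose_smul, fiberProj_transpose, sub_mul, mul_sub,
      mul_sub, one_mul, mul_one, one_mul, smul_mul_smul_comm, fiberProj_mul_self]
    module
  · -- on each fibre, `w - u` is orthogonal to `w + u`, so `P` halves `w - u`
    have hhalf : P *ᵥ w = (1 / 2 : 𝕜) • (w - u) := by
      rw [fiberProj_mulVec]
      ext i
      set S := ∑ k with d k = d i, (w - u) k ^ 2
      have hdot : 2 * ∑ k with d k = d i, (w - u) k * w k =
          S + (∑ k with d k = d i, w k ^ 2 - ∑ k with d k = d i, u k ^ 2) := by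
        simp only [S, mul_sum, ← sum_sub_distrib, ← sum_add_distrib, Pi.sub_apply]
        exact sum_congr rfl fun k _ => by ring
      rw [h (d i), sub_self, add_zero] at hdot
      rcases eq_or_ne S 0 with hS | hS
      · have hzero : (w - u) i = 0 := by
          have := (sum_eq_zero_iff_of_nonneg fun k _ => sq_nonneg ((w - u) k)).mp hS i
          exact pow_eq_zero_iff two_ne_zero |>.mp (this (mem_filter.mpr ⟨mem_univ i, rfl⟩))
        simp [hzero]
      · rw [← hdot] at hS ⊢
        have := right_ne_zero_of_mul hS
        simp only [Pi.smul_apply, smul_eq_mul]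
        field_simp
    rw [sub_mulVec, one_mulVec, smul_mulVec, hhalf]
    module

end FiberProj

section Orthogonal

theorem transpose_mul_vecMulVec_mul (Q : Matrix n n ℝ) (v w : n → ℝ) :
    Qᵀ * vecMulVec v w * Q = vecMulVec (Qᵀ *ᵥ v) (Qᵀ *ᵥ w) := by
  rw [mul_vecMulVec, vecMulVec_mul, ← mulVec_transpose]

variable [DecidableEq n]

theorem charpoly_transpose_mul_mul {Q : Matrix n n ℝ} (hQ : Qᵀ * Q = 1) (M : Matrix n n ℝ) :
    (Qᵀ * M * Q).charpoly = M.charpoly := by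
  rw [charpoly_mul_comm, ← Matrix.mul_assoc, mul_eq_one_comm.mp hQ, Matrix.one_mul]

theorem transpose_mul_mul_mul_transpose_mul {Q : Matrix n n ℝ} (hQ : Qᵀ * Q = 1)
    (M : Matrix n n ℝ) : Qᵀ * (Q * M * Qᵀ) * Q = M := by
  simp only [Matrix.mul_assoc, hQ, Matrix.mul_one]
  rw [← Matrix.mul_assoc, hQ, Matrix.one_mul]

theorem transpose_mulVec_eq_of_mulVec_eq {Q : Matrix n n ℝ} (hQ : Qᵀ * Q = 1) {v : n → ℝ}
    (hv : Q *ᵥ v = v) : Qᵀ *ᵥ v = v := by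
  conv_lhs => rw [← hv]
  rw [mulVec_mulVec, hQ, one_mulVec]

theorem IsHermitian.exists_orthogonal_diagonalization {A : Matrix n n ℝ} (hA : A.IsHermitian) :
    ∃ U : Matrix n n ℝ, Uᵀ * U = 1 ∧ A = U * diagonal hA.eigenvalues * Uᵀ := by
  refine ⟨hA.eigenvectorUnitary, ?_, ?_⟩
  · simpa [star_eq_conjTranspose] using Unitary.coe_star_mul_self hA.eigenvectorUnitary
  · conv_lhs => rw [hA.spectral_theorem]
    simp [Unitary.conjStarAlgAut_apply, star_eq_conjTranspose]

theorem exists_orthogonal_conj_of_charpoly_eq {A B : Matrix n n ℝ} (hA : A.IsHermitian)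
    (hB : B.IsHermitian) {v : n → ℝ} (h₁ : A.charpoly = B.charpoly)
    (h₂ : (vecMulVec v v - A).charpoly = (vecMulVec v v - B).charpoly) :
    ∃ Q : Matrix n n ℝ, Qᵀ * Q = 1 ∧ Q *ᵥ v = v ∧ Qᵀ * A * Q = B := by
  obtain ⟨U, hU, hAU⟩ := hA.exists_orthogonal_diagonalization
  obtain ⟨W, hW, hBW⟩ := hB.exists_orthogonal_diagonalization
  rw [(hA.eigenvalues_eq_eigenvalues_iff hB).mpr h₁] at hAU
  set D := diagonal hB.eigenvalues
  have hconj (X : Matrix n n ℝ) (hX : Xᵀ * X = 1) :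
      Xᵀ * (vecMulVec v v - X * D * Xᵀ) * X = vecMulVec (Xᵀ *ᵥ v) (Xᵀ *ᵥ v) - D := by
    rw [Matrix.mul_sub, Matrix.sub_mul, transpose_mul_vecMulVec_mul,
      transpose_mul_mul_mul_transpose_mul hX]
  have hangles := sum_filter_sq_eq_of_charpoly_vecMulVec_sub_diagonal_eq
    (d := hB.eigenvalues) (u := Uᵀ *ᵥ v) (w := Wᵀ *ᵥ v) <| by
      rw [← hconj U hU, ← hconj W hW, charpoly_transpose_mul_mul hU,
        charpoly_transpose_mul_mul hW, ← hAU, ← hBW, h₂]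
  obtain ⟨R, hR, hRD, hRw⟩ := exists_orthogonal_commute_diagonal_mulVec_eq hangles
  refine ⟨U * R * Wᵀ, ?_, ?_, ?_⟩
  · simp only [transpose_mul, transpose_transpose, Matrix.mul_assoc]
    rw [← Matrix.mul_assoc Uᵀ, hU, Matrix.one_mul, ← Matrix.mul_assoc Rᵀ, hR, Matrix.one_mul,
      mul_eq_one_comm.mp hW]
  · rw [← mulVec_mulVec, ← mulVec_mulVec, hRw, mulVec_mulVec, mul_eq_one_comm.mp hU, one_mulVec]
  · calc (U * R * Wᵀ)ᵀ * A * (U * R * Wᵀ) = W * (Rᵀ * (Uᵀ * A * U) * R) * Wᵀ := by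
          simp only [transpose_mul, transpose_transpose, Matrix.mul_assoc]
      _ = W * (Rᵀ * R * D) * Wᵀ := by
          rw [hAU, transpose_mul_mul_mul_transpose_mul hU, Matrix.mul_assoc Rᵀ, ← hRD.eq,
            ← Matrix.mul_assoc Rᵀ R]
      _ = B := by rw [hR, Matrix.one_mul, hBW]

theorem charpoly_eq_of_orthogonal_conj {A B Q : Matrix n n ℝ} {v : n → ℝ} (hQ : Qᵀ * Q = 1)
    (hv : Q *ᵥ v = v) (hAB : Qᵀ * A * Q = B) :
    A.charpoly = B.charpoly ∧ (vecMulVec v v - A).charpoly = (vecMulVec v v - B).charpoly := by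
  subst hAB
  refine ⟨(charpoly_transpose_mul_mul hQ A).symm, ?_⟩
  rw [← charpoly_transpose_mul_mul hQ (vecMulVec v v - A), Matrix.mul_sub, Matrix.sub_mul,
    transpose_mul_vecMulVec_mul, transpose_mulVec_eq_of_mulVec_eq hQ hv]

theorem charpoly_eq_and_charpoly_vecMulVec_sub_eq_iff {A B : Matrix n n ℝ} (hA : A.IsHermitian)
    (hB : B.IsHermitian) (v : n → ℝ) :
    A.charpoly = B.charpoly ∧ (vecMulVec v v - A).charpoly = (vecMulVec v v - B).charpoly ↔
      ∃ Q : Matrix n n ℝ, Qᵀ * Q = 1 ∧ Q *ᵥ v = v ∧ Qᵀ * A * Q = B :=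
  ⟨fun ⟨h₁, h₂⟩ => exists_orthogonal_conj_of_charpoly_eq hA hB h₁ h₂,
    fun ⟨_, hQ, hv, hAB⟩ => charpoly_eq_of_orthogonal_conj hQ hv hAB⟩

end Orthogonal

end Matrix

section Graph

variable {V : Type} [Fintype V] [DecidableEq V]

theorem isHermitian_adjMat (G : SimpleGraph V) : (adjMat G).IsHermitian := by
  classical
  exact G.isHermitian_adjMatrix ℝ

theorem adjMat_compl (G : SimpleGraph V) : adjMat Gᶜ = vecMulVec 1 1 - (1 + adjMat G) := by
  ext i j
  by_cases hij : i = j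
  · subst hij; simp [adjMat]
  · by_cases h : G.Adj i j <;> simp [adjMat, hij, h, one_apply]

theorem genCospectral_iff_charpoly_eq (G H : SimpleGraph V) :
    GenCospectral G H ↔ (1 + adjMat G).charpoly = (1 + adjMat H).charpoly ∧
      (vecMulVec 1 1 - (1 + adjMat G)).charpoly = (vecMulVec 1 1 - (1 + adjMat H)).charpoly := by
  rw [charpoly_one_add_eq_iff, ← adjMat_compl, ← adjMat_compl]
  rfl

end Graph

/-- **Johnson–Newman.** Two graphs on `n` vertices are generalized cospectral iff there is a
regular orthogonal matrix `Q` (orthogonal, with all row sums equal to `1`) with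
`Qᵀ A(G) Q = A(H)`. -/
theorem johnson_newman {n : ℕ} (G H : SimpleGraph (Fin n)) :
    GenCospectral G H ↔
      ∃ Q : Matrix (Fin n) (Fin n) ℝ,
        Qᵀ * Q = 1 ∧ (∀ i, ∑ j, Q i j = 1) ∧ Qᵀ * adjMat G * Q = adjMat H := by
  rw [genCospectral_iff_charpoly_eq, charpoly_eq_and_charpoly_vecMulVec_sub_eq_iff
    (isHermitian_one.add (isHermitian_adjMat G)) (isHermitian_one.add (isHermitian_adjMat H))]
  refine exists_congr fun Q => and_congr_right fun hQ => and_congr ?_ ?_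
  · simp only [funext_iff, mulVec, dotProduct, Pi.one_apply, mul_one]
  · rw [Matrix.mul_add, Matrix.add_mul, Matrix.mul_one, hQ, add_right_inj]
end

section
/- Let G₁ and G₂ be generalized cospectral graphs on the same number of vertices. Then for any finite simple graph H: (i) the disjoint unions G₁ ∪ H and G₂ ∪ H are generalized cospectral, and (ii) the joins G₁ ∨ H and G₂ ∨ H are generalized cospectral. -/
open SimpleGraph

/-- The join `G ∨ H` of two graphs: their disjoint union `G ⊕g H` together with an edge
between every vertex of `G` and every vertex of `H`. -/
def joinG {α β : Type} (G : SimpleGraph α) (H : SimpleGraph β) : SimpleGraph (α ⊕ β) :=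
  (G ⊕g H) ⊔ SimpleGraph.fromRel (fun x y => x.isLeft ∧ y.isRight)

/-!
Write `J` for the all-ones matrix and `N_A(x) = 1ᵀ (xI - A)⁻¹ 1`. By the matrix determinant lemma,
`det (xI - A + tJ) = det (xI - A) * (1 + t N_A(x))`; since the complement of a graph with adjacency
matrix `A` has adjacency matrix `J - I - A`, the characteristic polynomials of `G` and `Gᶜ` together
determine `N_A`. A Schur complement gives `p_A p_B (1 - N_A N_B)` for the characteristic polynomial
of the matrix `[A J; J B]` of a join, so it depends only on data shared by generalized cospectral
graphs. Disjoint unions have block-diagonal adjacency matrices, and complementation exchanges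
disjoint unions and joins.
-/

open Matrix Polynomial

theorem Polynomial.eq_of_eval_eq_of_eval_ne_zero {R : Type*} [CommRing R] [IsDomain R]
    [Infinite R] {p q r : R[X]} (hr : r ≠ 0) (h : ∀ x, r.eval x ≠ 0 → p.eval x = q.eval x) :
    p = q := by
  refine mul_right_cancel₀ hr (Polynomial.funext fun x => ?_)
  by_cases hx : r.eval x = 0
  · simp [hx]
  · simp [h x hx]

namespace Matrix

theorem of_one_mul_mul_of_one {R : Type*} [Semiring R] {ι κ : Type*} [Fintype κ]
    (M : Matrix κ κ R) :
    (of 1 : Matrix ι κ R) * M * (of 1 : Matrix κ ι R) = (∑ k, ∑ l, M k l) • of 1 := by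
  ext i j
  simp only [mul_apply, of_apply, Pi.one_apply, one_mul, mul_one, smul_apply, smul_eq_mul]
  exact Finset.sum_comm

section CommRing

variable {R : Type*} [CommRing R] {ι ι' κ : Type*} [Fintype ι] [DecidableEq ι] [Fintype ι']
  [DecidableEq ι'] [Fintype κ] [DecidableEq κ]

noncomputable def onesResolvent (A : Matrix ι ι R) (x : R) : R :=
  ∑ i, ∑ j, (scalar ι x - A)⁻¹ i j

theorem det_add_smul_of_one {M : Matrix ι ι R} (hM : IsUnit M.det) (t : R) :
    (M + t • of 1).det = M.det * (1 + t * ∑ i, ∑ j, M⁻¹ i j) := by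
  have hJ : t • (of 1 : Matrix ι ι R) =
      replicateCol Unit (fun _ => t) * replicateRow Unit (fun _ => (1 : R)) := by
    ext i j
    simp [Matrix.mul_apply]
  rw [hJ, det_add_replicateCol_mul_replicateRow hM, det_unique (n := Unit)]
  simp only [PUnit.default_eq_unit, add_apply, one_apply_eq, mul_apply, replicateRow_apply,
    replicateCol_apply, mul_one, mul_comm, Finset.mul_sum]
  rw [Finset.sum_comm]

theorem det_scalar_sub_fromBlocks_of_one (A : Matrix ι ι R) (B : Matrix κ κ R) (x : R)
    (hB : IsUnit (scalar κ x - B).det) :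
    (scalar (ι ⊕ κ) x - fromBlocks A (of 1) (of 1) B).det =
      (scalar κ x - B).det * (scalar ι x - A - onesResolvent B x • of 1).det := by
  have := (scalar κ x - B).invertibleOfIsUnitDet hB
  have hblocks : scalar (ι ⊕ κ) x - fromBlocks A (of 1) (of 1) B =
      fromBlocks (scalar ι x - A) (-of 1) (-of 1) (scalar κ x - B) := by
    ext (i | i) (j | j) <;> simp [diagonal_apply]
  rw [hblocks, det_fromBlocks₂₂, invOf_eq_nonsing_inv]
  simp only [Matrix.neg_mul, Matrix.mul_neg, neg_neg, of_one_mul_mul_of_one, onesResolvent]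

theorem eval_charpoly_fromBlocks_of_one {A : Matrix ι ι R} {B : Matrix κ κ R} {x : R}
    (hA : IsUnit (scalar ι x - A).det) (hB : IsUnit (scalar κ x - B).det) :
    (fromBlocks A (of 1) (of 1) B).charpoly.eval x =
      A.charpoly.eval x * B.charpoly.eval x * (1 - onesResolvent A x * onesResolvent B x) := by
  rw [eval_charpoly, det_scalar_sub_fromBlocks_of_one A B x hB, sub_eq_add_neg (_ - A),
    ← neg_smul, det_add_smul_of_one hA, eval_charpoly, eval_charpoly]
  simp only [onesResolvent]
  ring

theorem eval_charpoly_of_one_sub_one_sub (A : Matrix ι ι R) (x : R) :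
    (of 1 - 1 - A).charpoly.eval (-x - 1) =
      (-1) ^ Fintype.card ι * (scalar ι x - A + of 1).det := by
  rw [eval_charpoly, ← det_neg]
  congr 1
  rw [map_sub, map_neg, map_one]
  abel

theorem onesResolvent_eq_of_charpoly_eq [Nontrivial R] {A₁ : Matrix ι ι R} {A₂ : Matrix ι' ι' R}
    (h : A₁.charpoly = A₂.charpoly) (hc : (of 1 - 1 - A₁).charpoly = (of 1 - 1 - A₂).charpoly)
    {x : R} (hx : IsUnit (scalar ι x - A₁).det) :
    onesResolvent A₁ x = onesResolvent A₂ x := by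
  have hdet : (scalar ι x - A₁).det = (scalar ι' x - A₂).det := by
    rw [← eval_charpoly, ← eval_charpoly, h]
  have hcard : Fintype.card ι = Fintype.card ι' := by
    rw [← charpoly_natDegree_eq_dim A₁, ← charpoly_natDegree_eq_dim A₂, h]
  have hJ : (scalar ι x - A₁ + (1 : R) • of 1).det = (scalar ι' x - A₂ + (1 : R) • of 1).det := by
    rw [one_smul, one_smul]
    refine ((isUnit_neg_one (α := R)).pow (Fintype.card ι)).mul_left_cancel ?_
    rw [← eval_charpoly_of_one_sub_one_sub, hcard, ← eval_charpoly_of_one_sub_one_sub, hc]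
  rw [det_add_smul_of_one hx, det_add_smul_of_one (hdet ▸ hx), ← hdet] at hJ
  simpa [onesResolvent] using hx.mul_left_cancel hJ

end CommRing

theorem charpoly_fromBlocks_of_one_eq {K : Type*} [Field K] [Infinite K] {ι ι' κ : Type*}
    [Fintype ι] [DecidableEq ι] [Fintype ι'] [DecidableEq ι'] [Fintype κ] [DecidableEq κ]
    {A₁ : Matrix ι ι K} {A₂ : Matrix ι' ι' K} (h : A₁.charpoly = A₂.charpoly)
    (hc : (of 1 - 1 - A₁).charpoly = (of 1 - 1 - A₂).charpoly) (B : Matrix κ κ K) :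
    (fromBlocks A₁ (of 1) (of 1) B).charpoly = (fromBlocks A₂ (of 1) (of 1) B).charpoly := by
  refine eq_of_eval_eq_of_eval_ne_zero
    (mul_ne_zero A₁.charpoly_monic.ne_zero B.charpoly_monic.ne_zero) fun x hx => ?_
  rw [eval_mul] at hx
  have hA₁ : IsUnit (scalar ι x - A₁).det := by
    rw [isUnit_iff_ne_zero, ← eval_charpoly]
    exact left_ne_zero_of_mul hx
  have hA₂ : IsUnit (scalar ι' x - A₂).det := by
    rw [isUnit_iff_ne_zero, ← eval_charpoly, ← h]
    exact left_ne_zero_of_mul hx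
  have hB : IsUnit (scalar κ x - B).det := by
    rw [isUnit_iff_ne_zero, ← eval_charpoly]
    exact right_ne_zero_of_mul hx
  rw [eval_charpoly_fromBlocks_of_one hA₁ hB, eval_charpoly_fromBlocks_of_one hA₂ hB, h,
    onesResolvent_eq_of_charpoly_eq h hc hA₁]

end Matrix

namespace SimpleGraph

variable {V W : Type} {α : Type*}

theorem compl_sum (G : SimpleGraph V) (H : SimpleGraph W) : (G ⊕g H)ᶜ = joinG Gᶜ Hᶜ := by
  ext (v | v) (w | w) <;> simp [joinG]

theorem compl_joinG (G : SimpleGraph V) (H : SimpleGraph W) : (joinG G H)ᶜ = Gᶜ ⊕g Hᶜ := by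
  ext (v | v) (w | w) <;> simp [joinG] <;> tauto

theorem adjMatrix_compl [DecidableEq V] [AddGroup α] [One α] (G : SimpleGraph V)
    [DecidableRel G.Adj] : Gᶜ.adjMatrix α = of 1 - 1 - G.adjMatrix α := by
  ext i j
  by_cases h : i = j
  · simp [h]
  · by_cases hadj : G.Adj i j <;> simp [h, hadj]

theorem adjMatrix_sum [Zero α] [One α] (G : SimpleGraph V) (H : SimpleGraph W)
    [DecidableRel G.Adj] [DecidableRel H.Adj] [DecidableRel (G ⊕g H).Adj] :
    (G ⊕g H).adjMatrix α = fromBlocks (G.adjMatrix α) 0 0 (H.adjMatrix α) := by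
  ext (i | i) (j | j) <;> simp

theorem adjMatrix_joinG [Zero α] [One α] (G : SimpleGraph V) (H : SimpleGraph W)
    [DecidableRel G.Adj] [DecidableRel H.Adj] [DecidableRel (joinG G H).Adj] :
    (joinG G H).adjMatrix α = fromBlocks (G.adjMatrix α) (of 1) (of 1) (H.adjMatrix α) := by
  ext (i | i) (j | j) <;> rw [adjMatrix_apply] <;> simp [joinG]

theorem adjCharPoly_eq_charpoly [Fintype V] [DecidableEq V] (G : SimpleGraph V)
    [DecidableRel G.Adj] : adjCharPoly G = (G.adjMatrix ℝ).charpoly := by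
  unfold adjCharPoly
  congr

end SimpleGraph

section Cospectral

variable {V₁ V₂ W₁ W₂ : Type} [Fintype V₁] [DecidableEq V₁] [Fintype V₂] [DecidableEq V₂]
  [Fintype W₁] [DecidableEq W₁] [Fintype W₂] [DecidableEq W₂]
  {G₁ : SimpleGraph V₁} {G₂ : SimpleGraph V₂}

theorem Cospectral.sum {H₁ : SimpleGraph W₁} {H₂ : SimpleGraph W₂} (hG : Cospectral G₁ G₂)
    (hH : Cospectral H₁ H₂) : Cospectral (G₁ ⊕g H₁) (G₂ ⊕g H₂) := by
  classical
  simp only [Cospectral, adjCharPoly_eq_charpoly] at *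
  rw [adjMatrix_sum, adjMatrix_sum, charpoly_fromBlocks_zero₁₂,
    charpoly_fromBlocks_zero₁₂, hG, hH]

theorem GenCospectral.compl (h : GenCospectral G₁ G₂) : GenCospectral G₁ᶜ G₂ᶜ := by
  simpa [GenCospectral, and_comm] using h

theorem GenCospectral.joinG_right (h : GenCospectral G₁ G₂) (H : SimpleGraph W₁) :
    Cospectral (joinG G₁ H) (joinG G₂ H) := by
  classical
  obtain ⟨hG, hGc⟩ := h
  simp only [Cospectral, adjCharPoly_eq_charpoly, adjMatrix_compl] at *
  rw [adjMatrix_joinG, adjMatrix_joinG]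
  exact charpoly_fromBlocks_of_one_eq hG hGc _

end Cospectral

/-- If `G₁` and `G₂` are generalized cospectral, then for any graph `H`, the disjoint unions
`G₁ ∪ H` and `G₂ ∪ H` are generalized cospectral, and so are the joins `G₁ ∨ H` and
`G₂ ∨ H`. -/
theorem genCospectral_sum_and_join {n m : ℕ} (G₁ G₂ : SimpleGraph (Fin n))
    (H : SimpleGraph (Fin m)) (h : GenCospectral G₁ G₂) :
    GenCospectral (G₁ ⊕g H) (G₂ ⊕g H) ∧ GenCospectral (joinG G₁ H) (joinG G₂ H) := by
  refine ⟨⟨h.1.sum rfl, ?_⟩, h.joinG_right H, ?_⟩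
  · rw [compl_sum, compl_sum]
    exact h.compl.joinG_right Hᶜ
  · rw [compl_joinG, compl_joinG]
    exact h.2.sum rfl
end

section
/- There exist two finite simple graphs G and H on 9 vertices such that G and H are generalized cospectral, G and H are not isomorphic, G is a cograph (contains no induced P4), and H is not a cograph (contains an induced P4). -/
open SimpleGraph

/-!
The graph `cographNine` is `K₃ ⊔ (K₁ ∇ (K₁ ⊔ (K₁ ∇ 3K₁)))` (`∇` the join), a cograph by
construction, while `nonCographNine` is `K₄` with a path of length two attached at a vertex and
three leaves at the end of the path, which contains an induced `P₄`. Generalized cospectrality is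
witnessed, as in the Johnson–Newman theorem, by a rational orthogonal matrix `Q` with `Q 𝟙 = 𝟙`
and `A_G Q = Q A_H`: it intertwines both the adjacency matrices and the all-ones matrix, hence also
the adjacency matrices `J - I - A` of the complements.
-/

open Matrix

theorem Matrix.charpoly_eq_of_mul_eq_mul {R n : Type*} [CommRing R] [Fintype n] [DecidableEq n]
    {A B P : Matrix n n R} (hP : IsUnit P.det) (h : A * P = P * B) :
    A.charpoly = B.charpoly := by
  have hPu : IsUnit P := (isUnit_iff_isUnit_det P).mpr hP
  have hB : B = hPu.unit.val⁻¹ * A * hPu.unit.val := by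
    rw [IsUnit.unit_spec, mul_assoc, h, ← mul_assoc, nonsing_inv_mul _ hP, one_mul]
  rw [hB, charpoly_units_conj']

theorem Matrix.det_ne_zero_of_mul_eq_smul_one {R n : Type*} [CommRing R] [IsDomain R] [Fintype n]
    [DecidableEq n] {P Q : Matrix n n R} {c : R} (hc : c ≠ 0) (h : Q * P = c • 1) :
    P.det ≠ 0 := by
  intro hP
  have hdet := congrArg det h
  rw [det_mul, hP, mul_zero, det_smul, det_one, mul_one] at hdet
  exact pow_ne_zero _ hc hdet.symm

theorem SimpleGraph.map_intCast_adjMatrix {V : Type*} (G : SimpleGraph V) [DecidableRel G.Adj] :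
    (G.adjMatrix ℤ).map (Int.castRingHom ℝ) = G.adjMatrix ℝ := by
  ext i j
  simp [adjMatrix_apply, apply_ite]

theorem SimpleGraph.adjMatrix_compl_eq {V α : Type*} [DecidableEq V] [AddCommGroup α] [One α]
    [DecidableEq α] (G : SimpleGraph V) [DecidableRel G.Adj] :
    Gᶜ.adjMatrix α = of 1 - 1 - G.adjMatrix α := by
  rw [← compl_adjMatrix_eq_adjMatrix_compl (G := G) (α := α),
    ← one_add_adjMatrix_add_compl_adjMatrix_eq_of_one (G := G) (α := α)]
  abel

theorem adjCharPoly_eq_charpoly_adjMatrix {V : Type} [Fintype V] [DecidableEq V]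
    (G : SimpleGraph V) [DecidableRel G.Adj] : adjCharPoly G = (G.adjMatrix ℝ).charpoly := by
  unfold adjCharPoly
  congr

theorem genCospectral_of_intertwining {V : Type} [Fintype V] [DecidableEq V]
    {G H : SimpleGraph V} [DecidableRel G.Adj] [DecidableRel H.Adj] {P : Matrix V V ℤ}
    (hP : P.det ≠ 0) (hadj : G.adjMatrix ℤ * P = P * H.adjMatrix ℤ)
    (hJ : of 1 * P = P * of 1) : GenCospectral G H := by
  set f := Int.castRingHom ℝ
  have hunit : IsUnit (P.map f).det := by
    rw [← RingHom.mapMatrix_apply, ← RingHom.map_det, isUnit_iff_ne_zero]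
    exact (map_ne_zero_iff f Int.cast_injective).mpr hP
  have hadj' : G.adjMatrix ℝ * P.map f = P.map f * H.adjMatrix ℝ := by
    rw [← map_intCast_adjMatrix, ← map_intCast_adjMatrix, ← Matrix.map_mul, ← Matrix.map_mul,
      hadj]
  have hJ' : of 1 * P.map f = P.map f * of 1 := by
    have hJmap : (of 1 : Matrix V V ℤ).map f = of 1 := by ext; simp
    rw [← hJmap, ← Matrix.map_mul, ← Matrix.map_mul, hJ]
  refine ⟨?_, ?_⟩
  · unfold Cospectral
    rw [adjCharPoly_eq_charpoly_adjMatrix, adjCharPoly_eq_charpoly_adjMatrix]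
    exact charpoly_eq_of_mul_eq_mul hunit hadj'
  · unfold Cospectral
    rw [adjCharPoly_eq_charpoly_adjMatrix, adjCharPoly_eq_charpoly_adjMatrix,
      SimpleGraph.adjMatrix_compl_eq, SimpleGraph.adjMatrix_compl_eq]
    refine charpoly_eq_of_mul_eq_mul hunit ?_
    rw [sub_mul, sub_mul, mul_sub, mul_sub, hJ', hadj', one_mul, mul_one]

theorem isCograph_iff {V : Type} {G : SimpleGraph V} :
    IsCograph G ↔ ¬ ∃ a b c d, G.Adj a b ∧ G.Adj b c ∧ G.Adj c d ∧
      ¬ G.Adj a c ∧ ¬ G.Adj a d ∧ ¬ G.Adj b d := by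
  refine not_congr ⟨fun ⟨f, hf⟩ => ⟨f 0, f 1, f 2, f 3, ?_⟩, ?_⟩
  · simp only [hf, pathGraph_adj]
    decide
  · rintro ⟨a, b, c, d, hab, hbc, hcd, hac, had, hbd⟩
    have hinj : Function.Injective ![a, b, c, d] := by
      intro i j hij
      fin_cases i <;> fin_cases j <;> simp_all [G.adj_comm]
    refine ⟨⟨_, hinj⟩, fun i j => ?_⟩
    fin_cases i <;> fin_cases j <;> simp_all [pathGraph_adj, G.adj_comm]

theorem IsCograph.of_iso {V W : Type} {G : SimpleGraph V} {H : SimpleGraph W} (hH : IsCograph H)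
    (e : G ≃g H) : IsCograph G := by
  rintro ⟨f, hf⟩
  exact hH ⟨f.trans e.toEquiv.toEmbedding, fun i j => by simpa [e.map_adj_iff] using hf i j⟩

def cographNine : SimpleGraph (Fin 9) :=
  SimpleGraph.fromRel fun i j => (i, j) ∈
    [(0, 1), (0, 2), (1, 2), (3, 4), (3, 5), (3, 6), (3, 7), (3, 8), (4, 5), (4, 6), (4, 7)]

def nonCographNine : SimpleGraph (Fin 9) :=
  SimpleGraph.fromRel fun i j => (i, j) ∈
    [(0, 1), (0, 2), (0, 3), (1, 2), (1, 3), (2, 3), (3, 4), (4, 5), (5, 6), (5, 7), (5, 8)]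

instance : DecidableRel cographNine.Adj :=
  inferInstanceAs (DecidableRel (SimpleGraph.fromRel _).Adj)

instance : DecidableRel nonCographNine.Adj :=
  inferInstanceAs (DecidableRel (SimpleGraph.fromRel _).Adj)

/-- `15⁻¹ • intertwiner` is the matrix `Q` of the header. It is forced on the main eigenvectors;
on the non-main eigenspaces (eigenvalue `-1`: vectors supported on `{0, 1, 2}` with zero sum in
both graphs; eigenvalue `0`: the twins `{5, 6, 7}` of `cographNine` and the leaves `{6, 7, 8}` of
`nonCographNine`) it was chosen to be the obvious relabelling. -/
def intertwiner : Matrix (Fin 9) (Fin 9) ℤ :=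
  !![9, -6, -6, 0, 3, 6, 3, 3, 3;
    -6, 9, -6, 0, 3, 6, 3, 3, 3;
    -6, -6, 9, 0, 3, 6, 3, 3, 3;
    6, 6, 6, 0, -3, 9, -3, -3, -3;
    0, 0, 0, 15, 0, 0, 0, 0, 0;
    3, 3, 3, 0, 6, -3, 11, -4, -4;
    3, 3, 3, 0, 6, -3, -4, 11, -4;
    3, 3, 3, 0, 6, -3, -4, -4, 11;
    3, 3, 3, 0, -9, -3, 6, 6, 6]

theorem intertwiner_transpose_mul_self : intertwinerᵀ * intertwiner = (225 : ℤ) • 1 := by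
  decide

theorem adjMatrix_mul_intertwiner :
    cographNine.adjMatrix ℤ * intertwiner = intertwiner * nonCographNine.adjMatrix ℤ := by
  decide

theorem allOnes_mul_intertwiner : of 1 * intertwiner = intertwiner * of 1 := by
  decide

theorem isCograph_cographNine : IsCograph cographNine :=
  isCograph_iff.mpr (by decide)

theorem not_isCograph_nonCographNine : ¬ IsCograph nonCographNine :=
  fun h => isCograph_iff.mp h ⟨2, 3, 4, 5, by decide⟩

/-- There is a pair of generalized cospectral, non-isomorphic graphs on 9 vertices,
one of which is a cograph and the other not. -/
theorem exists_nonDGS_cograph_on_nine_vertices :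
    ∃ G H : SimpleGraph (Fin 9),
      GenCospectral G H ∧ ¬ Nonempty (G ≃g H) ∧ IsCograph G ∧ ¬ IsCograph H := by
  have hdet : intertwiner.det ≠ 0 :=
    det_ne_zero_of_mul_eq_smul_one (by norm_num) intertwiner_transpose_mul_self
  refine ⟨cographNine, nonCographNine,
    genCospectral_of_intertwining hdet adjMatrix_mul_intertwiner allOnes_mul_intertwiner,
    fun ⟨e⟩ => not_isCograph_nonCographNine (isCograph_cographNine.of_iso e.symm),
    isCograph_cographNine, not_isCograph_nonCographNine⟩
end

section
/- Let T and T' be two hierarchies of the same size m with m ≥ 2. Then for every n, the number of isomorphism classes of hierarchies of size n containing no subhierarchy isomorphic to T equals the number of isomorphism classes of hierarchies of size n containing no subhierarchy isomorphic to T'. -/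
/-- Finite rooted unordered trees, presented with an ordered list of children
(unorderedness is taken care of by the isomorphism relation `RTree.Iso`). -/
inductive RTree : Type
  | node : List RTree → RTree

/-- The number of leaves (external vertices) of a rooted tree: the *size* of a hierarchy. -/
def RTree.leaves : RTree → ℕ
  | .node [] => 1
  | .node (a :: l) => ((a :: l).attach.map (fun x => RTree.leaves x.1)).sum
decreasing_by
  have := List.sizeOf_lt_of_mem x.2
  simp only [RTree.node.sizeOf_spec]
  omega

/-- A hierarchy: a rooted tree in which no vertex has exactly one child. -/
inductive RTree.IsHierarchy : RTree → Prop
  | node {l : List RTree} : l.length ≠ 1 → (∀ t ∈ l, RTree.IsHierarchy t) →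
      RTree.IsHierarchy (.node l)

/-- `s.SubtreeOf t` : `s` is the subtree of `t` rooted at some vertex of `t`
(that vertex together with all of its descendants). -/
inductive RTree.SubtreeOf : RTree → RTree → Prop
  | refl (t : RTree) : RTree.SubtreeOf t t
  | child {s c : RTree} {l : List RTree} : c ∈ l → RTree.SubtreeOf s c →
      RTree.SubtreeOf s (.node l)

/-- Isomorphism of rooted unordered trees: the children of the two roots can be
matched up bijectively by isomorphisms. -/
inductive RTree.Iso : RTree → RTree → Prop
  | node {l₁ l l₂ : List RTree} (h₁ : List.Forall₂ RTree.Iso l₁ l) (h₂ : l.Perm l₂) :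
      RTree.Iso (.node l₁) (.node l₂)

/-- The number of isomorphism classes of hierarchies of size `n` (OEIS A000669). -/
noncomputable def hierarchyCount (n : ℕ) : ℕ :=
  Nat.card (Quot fun a b : {t : RTree // t.IsHierarchy ∧ t.leaves = n} => RTree.Iso a.1 b.1)

/-- `t` contains no subhierarchy isomorphic to `S`. -/
def RTree.Avoids (t S : RTree) : Prop :=
  ∀ s : RTree, s.SubtreeOf t → ¬ RTree.Iso s S

/-- The number of isomorphism classes of hierarchies of size `n` containing
no subhierarchy isomorphic to `S`. -/
noncomputable def avoidCount (S : RTree) (n : ℕ) : ℕ :=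
  Nat.card (Quot fun a b : {t : RTree // t.IsHierarchy ∧ t.leaves = n ∧ t.Avoids S} =>
    RTree.Iso a.1 b.1)

/-!
Suppose `T ≇ T'`. The map `swap T T'` replaces, top-down, every maximal subtree isomorphic to `T`
by `T'` and every one isomorphic to `T'` by `T`. Since `|T| = |T'|`, it preserves size and fixes
every tree with fewer leaves than `T`. Hence it fixes each hierarchy of size `|T|` other than `T`
and `T'`, while larger hierarchies stay larger, so it never creates a copy of `T` or `T'` at a
vertex that did not carry one. It therefore respects isomorphism, is an involution up to
isomorphism on hierarchies, and exchanges the `T`-avoiding and `T'`-avoiding hierarchies of each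
size, which gives a bijection between their isomorphism classes.
-/

theorem List.Forall₂.comp {α β γ : Type*} {R : α → β → Prop} {S : β → γ → Prop} :
    ∀ {l₁ l₂ l₃}, Forall₂ R l₁ l₂ → Forall₂ S l₂ l₃ → Forall₂ (Relation.Comp R S) l₁ l₃
  | _, _, _, .nil, .nil => .nil
  | _, _, _, .cons hab h₁, .cons hbc h₂ => .cons ⟨_, hab, hbc⟩ (h₁.comp h₂)

theorem List.Forall₂.imp_of_mem_left {α β : Type*} {R S : α → β → Prop} {l₁ : List α}
    {l₂ : List β} (H : ∀ a ∈ l₁, ∀ b, R a b → S a b) (h : Forall₂ R l₁ l₂) : Forall₂ S l₁ l₂ :=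
  ((forall₂_and_left l₁ l₂).2 ⟨H, h⟩).imp fun _ _ h => h.1 _ h.2

theorem Nat.card_quot_congr {α β : Type*} {r : α → α → Prop} {s : β → β → Prop}
    (f : α → β) (g : β → α) (hf : ∀ a b, r a b → s (f a) (f b))
    (hg : ∀ a b, s a b → r (g a) (g b)) (hgf : ∀ a, r (g (f a)) a) (hfg : ∀ b, s (f (g b)) b) :
    Nat.card (Quot r) = Nat.card (Quot s) :=
  Nat.card_congr
    { toFun := Quot.map f hf
      invFun := Quot.map g hg
      left_inv := Quot.ind fun a => Quot.sound (hgf a)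
      right_inv := Quot.ind fun b => Quot.sound (hfg b) }

namespace RTree

@[elab_as_elim]
theorem ind {motive : RTree → Prop} (node : ∀ l, (∀ t ∈ l, motive t) → motive (.node l)) :
    ∀ t, motive t
  | .node l => node l fun t _ => ind node t
decreasing_by
  have := List.sizeOf_lt_of_mem ‹t ∈ l›
  simp only [RTree.node.sizeOf_spec]
  omega

theorem Iso.refl (t : RTree) : Iso t t := by
  induction t using RTree.ind with
  | node l ih => exact .node (List.forall₂_same.2 ih) (.refl l)

theorem Iso.symm {t s : RTree} (h : Iso t s) : Iso s t := by
  induction t using RTree.ind generalizing s with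
  | node l₁ ih =>
    obtain ⟨h₁, h₂⟩ := h
    have h₁' : List.Forall₂ Iso _ l₁ :=
      List.Forall₂.flip (h₁.imp_of_mem_left fun a ha _ hab => ih a ha hab)
    obtain ⟨l', hf, hp⟩ := List.perm_comp_forall₂ h₂.symm h₁'
    exact .node hf hp

theorem Iso.trans {t s u : RTree} (h₁ : Iso t s) (h₂ : Iso s u) : Iso t u := by
  induction t using RTree.ind generalizing s u with
  | node l₁ ih =>
    obtain ⟨ha, hpa⟩ := h₁
    obtain ⟨hb, hpb⟩ := h₂
    obtain ⟨lc, hf, hp⟩ := List.perm_comp_forall₂ hpa hb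
    exact .node ((ha.comp hf).imp_of_mem_left fun a ha _ ⟨_, hab, hbc⟩ => ih a ha hab hbc)
      (hp.trans hpb)

theorem leaves_node {l : List RTree} (hl : l ≠ []) : (node l).leaves = (l.map leaves).sum := by
  cases l with
  | nil => exact absurd rfl hl
  | cons a l => rw [leaves]; simp

theorem one_le_leaves (t : RTree) : 1 ≤ t.leaves := by
  induction t using RTree.ind with
  | node l ih =>
    cases l with
    | nil => rw [leaves]
    | cons a l =>
      have ha : a ∈ a :: l := List.mem_cons_self
      rw [leaves_node (List.cons_ne_nil a l)]
      exact (ih a ha).trans (List.le_sum_of_mem (List.mem_map_of_mem ha))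

theorem leaves_node_eq_max (l : List RTree) : (node l).leaves = max 1 (l.map leaves).sum := by
  cases l with
  | nil => rw [leaves]; rfl
  | cons a l =>
    rw [leaves_node (List.cons_ne_nil a l), max_eq_right]
    exact (one_le_leaves a).trans (List.le_sum_of_mem (List.mem_map_of_mem List.mem_cons_self))

theorem leaves_le_of_mem {c : RTree} {l : List RTree} (hc : c ∈ l) :
    c.leaves ≤ (node l).leaves := by
  rw [leaves_node (List.ne_nil_of_mem hc)]
  exact List.le_sum_of_mem (List.mem_map_of_mem hc)

theorem leaves_lt_of_mem {c : RTree} {l : List RTree} (hc : c ∈ l) (hl : l.length ≠ 1) :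
    c.leaves < (node l).leaves := by
  obtain ⟨u, v, rfl⟩ := List.append_of_mem hc
  obtain ⟨d, hd⟩ : ∃ d, d ∈ u ++ v :=
    List.exists_mem_of_ne_nil _ fun h => by simp_all [List.append_eq_nil_iff]
  have := (one_le_leaves d).trans (List.le_sum_of_mem (List.mem_map_of_mem hd))
  rw [leaves_node (List.ne_nil_of_mem hc)]
  simp only [List.map_append, List.map_cons, List.sum_append, List.sum_cons] at this ⊢
  omega

theorem Iso.leaves_eq {t s : RTree} (h : Iso t s) : t.leaves = s.leaves := by
  induction t using RTree.ind generalizing s with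
  | node l₁ ih =>
    cases h with
    | @node _ l _ h₁ h₂ =>
      have hmap : l₁.map leaves = l.map leaves := by
        rw [← List.forall₂_eq_eq_eq, List.forall₂_map_left_iff, List.forall₂_map_right_iff]
        exact h₁.imp_of_mem_left fun a ha _ hab => ih a ha hab
      rw [leaves_node_eq_max, leaves_node_eq_max, hmap, (h₂.map leaves).sum_eq]

theorem isHierarchy_node_iff {l : List RTree} :
    (node l).IsHierarchy ↔ l.length ≠ 1 ∧ ∀ t ∈ l, t.IsHierarchy :=
  ⟨fun h => by cases h; exact ⟨‹_›, ‹_›⟩, fun h => .node h.1 h.2⟩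

theorem SubtreeOf.leaves_le {s t : RTree} (h : s.SubtreeOf t) : s.leaves ≤ t.leaves := by
  induction h with
  | refl => exact le_rfl
  | child hc _ ih => exact ih.trans (leaves_le_of_mem hc)

theorem avoids_node_iff {l : List RTree} {S : RTree} :
    (node l).Avoids S ↔ ¬ Iso (node l) S ∧ ∀ c ∈ l, c.Avoids S := by
  refine ⟨fun h => ⟨h _ (.refl _), fun c hc s hs => h s (.child hc hs)⟩, ?_⟩
  rintro ⟨hroot, hchildren⟩ s hs
  cases hs with
  | refl => exact hroot
  | child hc hs => exact hchildren _ hc s hs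

theorem Avoids.of_leaves_lt {t S : RTree} (h : t.leaves < S.leaves) : t.Avoids S :=
  fun _ hs hiso => (hs.leaves_le.trans_lt h).ne hiso.leaves_eq

theorem avoids_of_not_iso {t S : RTree} (ht : t.IsHierarchy) (hl : t.leaves = S.leaves)
    (h : ¬ Iso t S) : t.Avoids S := by
  obtain ⟨l⟩ := t
  exact avoids_node_iff.2 ⟨h, fun c hc =>
    .of_leaves_lt (hl ▸ leaves_lt_of_mem hc (isHierarchy_node_iff.1 ht).1)⟩

theorem avoids_congr {t S S' : RTree} (h : Iso S S') : t.Avoids S ↔ t.Avoids S' :=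
  ⟨fun ha s hs hs' => ha s hs (hs'.trans h.symm), fun ha s hs hs' => ha s hs (hs'.trans h)⟩

section Swap

variable (T T' : RTree)

open scoped Classical in
noncomputable def swap : RTree → RTree
  | .node l =>
    if Iso (.node l) T then T'
    else if Iso (.node l) T' then T
    else .node (l.attach.map fun x => swap x.1)
decreasing_by
  have := List.sizeOf_lt_of_mem x.2
  simp only [RTree.node.sizeOf_spec]
  omega

open scoped Classical in
theorem swap_node (l : List RTree) :
    swap T T' (.node l) =
      if Iso (.node l) T then T'
      else if Iso (.node l) T' then T
      else .node (l.map (swap T T')) := by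
  rw [swap]
  simp

variable {T T'}

theorem swap_of_iso_left {t : RTree} (h : Iso t T) : swap T T' t = T' := by
  obtain ⟨l⟩ := t
  rw [swap_node, if_pos h]

theorem swap_of_iso_right {t : RTree} (hT : ¬ Iso t T) (hT' : Iso t T') : swap T T' t = T := by
  obtain ⟨l⟩ := t
  rw [swap_node, if_neg hT, if_pos hT']

theorem swap_node_of_not_iso {l : List RTree} (hT : ¬ Iso (node l) T) (hT' : ¬ Iso (node l) T') :
    swap T T' (node l) = node (l.map (swap T T')) := by
  rw [swap_node, if_neg hT, if_neg hT']

theorem swap_right_iso : Iso (swap T T' T') T := by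
  by_cases h : Iso T' T
  · rw [swap_of_iso_left h]; exact h
  · rw [swap_of_iso_right h (.refl _)]; exact .refl _

theorem Iso.swap {t s : RTree} (h : Iso t s) : Iso (swap T T' t) (swap T T' s) := by
  induction t using RTree.ind generalizing s with
  | node l₁ ih =>
    by_cases hA : Iso (.node l₁) T
    · rw [swap_of_iso_left hA, swap_of_iso_left (h.symm.trans hA)]; exact .refl _
    by_cases hB : Iso (.node l₁) T'
    · rw [swap_of_iso_right hA hB, swap_of_iso_right (fun h' => hA (h.trans h')) (h.symm.trans hB)]
      exact .refl _
    obtain ⟨l₂⟩ := s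
    rw [swap_node_of_not_iso hA hB,
      swap_node_of_not_iso (fun h' => hA (h.trans h')) (fun h' => hB (h.trans h'))]
    obtain ⟨h₁, h₂⟩ := h
    refine .node ?_ (h₂.map _)
    rw [List.forall₂_map_left_iff, List.forall₂_map_right_iff]
    exact h₁.imp_of_mem_left fun a ha _ hab => ih a ha hab

theorem swap_comm (hne : ¬ Iso T T') : swap T' T = swap T T' := by
  funext t
  induction t using RTree.ind with
  | node l ih =>
    by_cases hA : Iso (node l) T
    · have hB : ¬ Iso (node l) T' := fun h => hne (hA.symm.trans h)
      rw [swap_of_iso_right hB hA, swap_of_iso_left hA]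
    by_cases hB : Iso (node l) T'
    · rw [swap_of_iso_left hB, swap_of_iso_right hA hB]
    rw [swap_node_of_not_iso hB hA, swap_node_of_not_iso hA hB, List.map_congr_left ih]

theorem IsHierarchy.swap (hT : T.IsHierarchy) (hT' : T'.IsHierarchy) {t : RTree}
    (ht : t.IsHierarchy) : (swap T T' t).IsHierarchy := by
  induction t using RTree.ind with
  | node l ih =>
    by_cases hA : Iso (.node l) T
    · rwa [swap_of_iso_left hA]
    by_cases hB : Iso (.node l) T'
    · rwa [swap_of_iso_right hA hB]
    rw [isHierarchy_node_iff] at ht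
    rw [swap_node_of_not_iso hA hB, isHierarchy_node_iff, List.length_map, List.forall_mem_map]
    exact ⟨ht.1, fun c hc => ih c hc (ht.2 c hc)⟩

theorem leaves_swap (hl : T.leaves = T'.leaves) (t : RTree) : (swap T T' t).leaves = t.leaves := by
  induction t using RTree.ind with
  | node l ih =>
    by_cases hA : Iso (node l) T
    · rw [swap_of_iso_left hA, ← hl, hA.leaves_eq]
    by_cases hB : Iso (node l) T'
    · rw [swap_of_iso_right hA hB, hl, hB.leaves_eq]
    rw [swap_node_of_not_iso hA hB, leaves_node_eq_max, leaves_node_eq_max, List.map_map]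
    congr 2
    exact List.map_congr_left ih

theorem swap_eq_self_of_leaves_lt (hl : T.leaves = T'.leaves) {t : RTree}
    (h : t.leaves < T.leaves) : swap T T' t = t := by
  induction t using RTree.ind with
  | node l ih =>
    rw [swap_node_of_not_iso (fun h' => h.ne h'.leaves_eq)
      (fun h' => h.ne (h'.leaves_eq.trans hl.symm)),
      List.map_congr_left (g := id) fun c hc => ih c hc ((leaves_le_of_mem hc).trans_lt h),
      List.map_id]

theorem swap_eq_self_of_leaves_le (hl : T.leaves = T'.leaves) {t : RTree} (ht : t.IsHierarchy)
    (hT : ¬ Iso t T) (hT' : ¬ Iso t T') (h : t.leaves ≤ T.leaves) : swap T T' t = t := by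
  obtain ⟨l⟩ := t
  rw [swap_node_of_not_iso hT hT', List.map_congr_left (f := swap T T') (g := id) fun c hc =>
    swap_eq_self_of_leaves_lt hl ((leaves_lt_of_mem hc (isHierarchy_node_iff.1 ht).1).trans_le h),
    List.map_id]

theorem not_iso_swap (hl : T.leaves = T'.leaves) {t : RTree} (ht : t.IsHierarchy)
    (hT : ¬ Iso t T) (hT' : ¬ Iso t T') : ¬ Iso (swap T T' t) T ∧ ¬ Iso (swap T T' t) T' := by
  rcases le_or_gt t.leaves T.leaves with h | h
  · rw [swap_eq_self_of_leaves_le hl ht hT hT' h]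
    exact ⟨hT, hT'⟩
  · rw [← leaves_swap hl t] at h
    exact ⟨fun h' => h.ne' h'.leaves_eq, fun h' => h.ne' (h'.leaves_eq.trans hl.symm)⟩

theorem Avoids.swap (hT : T.IsHierarchy) (hl : T.leaves = T'.leaves) (hne : ¬ Iso T T')
    {t : RTree} (ht : t.IsHierarchy) (ha : t.Avoids T) : (swap T T' t).Avoids T' := by
  induction t using RTree.ind with
  | node l ih =>
    have hA : ¬ Iso (.node l) T := (avoids_node_iff.1 ha).1
    by_cases hB : Iso (.node l) T'
    · rw [swap_of_iso_right hA hB]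
      exact avoids_of_not_iso hT hl hne
    have hroot := (not_iso_swap hl ht hA hB).2
    rw [swap_node_of_not_iso hA hB] at hroot ⊢
    refine avoids_node_iff.2 ⟨hroot, ?_⟩
    rw [List.forall_mem_map]
    exact fun c hc => ih c hc ((isHierarchy_node_iff.1 ht).2 c hc) ((avoids_node_iff.1 ha).2 c hc)

theorem swap_swap_iso (hl : T.leaves = T'.leaves) {t : RTree} (ht : t.IsHierarchy) :
    Iso (swap T T' (swap T T' t)) t := by
  induction t using RTree.ind with
  | node l ih =>
    by_cases hA : Iso (.node l) T
    · rw [swap_of_iso_left hA]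
      exact swap_right_iso.trans hA.symm
    by_cases hB : Iso (.node l) T'
    · rw [swap_of_iso_right hA hB, swap_of_iso_left (.refl T)]
      exact hB.symm
    obtain ⟨hA', hB'⟩ := not_iso_swap hl ht hA hB
    rw [swap_node_of_not_iso hA hB] at hA' hB' ⊢
    rw [swap_node_of_not_iso hA' hB', List.map_map]
    refine .node ?_ (.refl l)
    rw [List.forall₂_map_left_iff, List.forall₂_same]
    exact fun c hc => ih c hc ((isHierarchy_node_iff.1 ht).2 c hc)

end Swap

end RTree

open RTree

theorem avoidCount_congr {S S' : RTree} (h : Iso S S') : avoidCount S = avoidCount S' := by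
  funext n
  exact Nat.card_quot_congr
    (Subtype.map id fun _ => And.imp_right (And.imp_right (avoids_congr h).1))
    (Subtype.map id fun _ => And.imp_right (And.imp_right (avoids_congr h).2))
    (fun _ _ => id) (fun _ _ => id) (fun t => .refl t.1) (fun t => .refl t.1)

theorem avoidCount_eq_of_not_iso {T T' : RTree} (hT : T.IsHierarchy) (hT' : T'.IsHierarchy)
    (hl : T.leaves = T'.leaves) (hne : ¬ Iso T T') (n : ℕ) : avoidCount T n = avoidCount T' n := by
  have hswap : ∀ {S S' : RTree}, S.IsHierarchy → S'.IsHierarchy → S.leaves = S'.leaves →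
      ¬ Iso S S' → ∀ t : RTree, t.IsHierarchy ∧ t.leaves = n ∧ t.Avoids S →
        (swap S S' t).IsHierarchy ∧ (swap S S' t).leaves = n ∧ (swap S S' t).Avoids S' :=
    fun hS hS' hl hne t ⟨ht, hn, ha⟩ =>
      ⟨IsHierarchy.swap hS hS' ht, (leaves_swap hl t).trans hn, ha.swap hS hl hne ht⟩
  have hswap' := hswap hT' hT hl.symm (fun h => hne h.symm)
  rw [swap_comm hne] at hswap'
  exact Nat.card_quot_congr (Subtype.map _ (hswap hT hT' hl hne)) (Subtype.map _ hswap')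
    (fun _ _ => Iso.swap) (fun _ _ => Iso.swap) (fun t => swap_swap_iso hl t.2.1)
    (fun t => swap_swap_iso hl t.2.1)

theorem avoidCount_eq_of_leaves_eq_general {m : ℕ} (T T' : RTree)
    (hT : T.IsHierarchy) (hT' : T'.IsHierarchy)
    (hTm : T.leaves = m) (hT'm : T'.leaves = m) (n : ℕ) :
    avoidCount T n = avoidCount T' n := by
  by_cases h : Iso T T'
  · rw [avoidCount_congr h]
  · exact avoidCount_eq_of_not_iso hT hT' (hTm.trans hT'm.symm) h n

/-- If `T` and `T'` are hierarchies of the same size `m ≥ 2`, then for every `n` the number of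
isomorphism classes of hierarchies of size `n` avoiding `T` equals the number of those
avoiding `T'`. -/
theorem avoidCount_eq_of_leaves_eq {m : ℕ} (hm : 2 ≤ m) (T T' : RTree)
    (hT : T.IsHierarchy) (hT' : T'.IsHierarchy)
    (hTm : T.leaves = m) (hT'm : T'.leaves = m) (n : ℕ) :
    avoidCount T n = avoidCount T' n :=
  avoidCount_eq_of_leaves_eq_general T T' hT hT' hTm hT'm n
end
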